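/- If f : [0,T] → ℝ is absolutely continuous and α ∈ (0,1), then I^α f is absolutely continuous on [0,T] and (I^α f)'(t) = I^α f'(t) + (t^{α-1}/Γ(α)) f(0) for almost every t ∈ (0,T). -/

import Mathlib

/-!
Write `f = f 0 + ∫₀^· f'`. The constant part contributes
`I^α (f 0) (t) = ∫₀ᵗ s^(α-1)/Γ(α) · f 0 ds`. For the primitive part, swapping the order of
integration over the triangle `0 < τ ≤ s ≤ t` (Dirichlet's formula) shows that `I^α (∫₀^· f')`
and `∫₀^· I^α f'` both equal `I^(α+1) f'`. So `I^α f` is the primitive of the integrable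
function `I^α f' + t^(α-1)/Γ(α) · f 0`, and the Lebesgue differentiation theorem identifies its
derivative almost everywhere.
-/

open MeasureTheory Set intervalIntegral

/-- Riemann–Liouville fractional integral of order `α` with base point `0`. -/
noncomputable def riemannLiouville (α : ℝ) (f : ℝ → ℝ) (t : ℝ) : ℝ :=
  (1 / Real.Gamma α) * ∫ τ in (0:ℝ)..t, (t - τ) ^ (α - 1) * f τ

section Kernel

variable {α : ℝ}

lemma integral_sub_rpow (hα : 0 < α) (τ t : ℝ) :
    ∫ s in τ..t, (s - τ) ^ (α - 1) = (t - τ) ^ α / α := by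
  rw [integral_comp_sub_right (fun x => x ^ (α - 1)), integral_rpow (by left; linarith),
    sub_add_cancel, sub_self, Real.zero_rpow hα.ne', sub_zero]

lemma integral_rpow_sub (hα : 0 < α) (τ t : ℝ) :
    ∫ s in τ..t, (t - s) ^ (α - 1) = (t - τ) ^ α / α := by
  rw [integral_comp_sub_left (fun x => x ^ (α - 1)), integral_rpow (by left; linarith),
    sub_add_cancel, sub_self, Real.zero_rpow hα.ne', sub_zero]

lemma intervalIntegrable_sub_rpow (hα : 0 < α) (τ t : ℝ) :
    IntervalIntegrable (fun s => (s - τ) ^ (α - 1)) volume τ t := by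
  simpa using (intervalIntegrable_rpow' (a := 0) (b := t - τ) (by linarith)).comp_sub_right τ

lemma intervalIntegrable_rpow_sub (hα : 0 < α) (τ t : ℝ) :
    IntervalIntegrable (fun s => (t - s) ^ (α - 1)) volume τ t := by
  simpa using
    ((intervalIntegrable_rpow' (a := 0) (b := t - τ) (by linarith)).comp_sub_left t).symm

end Kernel

section Dirichlet

variable {E : Type*} [NormedAddCommGroup E] [NormedSpace ℝ E] {a t : ℝ}

lemma indicator_le_apply_eq_indicator_Iic {M : Type*} [Zero M] (G : ℝ × ℝ → M) (s τ : ℝ) :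
    {p : ℝ × ℝ | p.2 ≤ p.1}.indicator G (s, τ)
      = (Iic s).indicator (fun τ => G (s, τ)) τ := by
  by_cases h : τ ≤ s <;> simp [indicator, h]

lemma indicator_le_apply_eq_indicator_Ici {M : Type*} [Zero M] (G : ℝ × ℝ → M) (s τ : ℝ) :
    {p : ℝ × ℝ | p.2 ≤ p.1}.indicator G (s, τ)
      = (Ici τ).indicator (fun s => G (s, τ)) s := by
  by_cases h : τ ≤ s <;> simp [indicator, h]

lemma setIntegral_indicator_le_left (G : ℝ × ℝ → E) {s : ℝ} (hs : s ∈ Ioc a t) :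
    ∫ τ in Ioc a t, {p : ℝ × ℝ | p.2 ≤ p.1}.indicator G (s, τ)
      = ∫ τ in a..s, G (s, τ) := by
  simp_rw [indicator_le_apply_eq_indicator_Iic]
  rw [setIntegral_indicator measurableSet_Iic, Ioc_inter_Iic, min_eq_right hs.2,
    integral_of_le hs.1.le]

lemma Ioc_inter_Ici_eq_Icc {τ : ℝ} (hτ : τ ∈ Ioc a t) : Ioc a t ∩ Ici τ = Icc τ t :=
  Set.ext fun _ => ⟨fun h => ⟨h.2, h.1.2⟩, fun h => ⟨⟨hτ.1.trans_le h.1, h.2⟩, h.1⟩⟩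

lemma setIntegral_indicator_le_right (G : ℝ × ℝ → E) {τ : ℝ} (hτ : τ ∈ Ioc a t) :
    ∫ s in Ioc a t, {p : ℝ × ℝ | p.2 ≤ p.1}.indicator G (s, τ)
      = ∫ s in τ..t, G (s, τ) := by
  simp_rw [indicator_le_apply_eq_indicator_Ici]
  rw [setIntegral_indicator measurableSet_Ici, Ioc_inter_Ici_eq_Icc hτ,
    integral_Icc_eq_integral_Ioc, integral_of_le hτ.2]

lemma integral_integral_swap_triangle {F : ℝ → ℝ → E}
    (hF : Integrable ({p : ℝ × ℝ | p.2 ≤ p.1}.indicator (Function.uncurry F))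
      ((volume.restrict (Ioc a t)).prod (volume.restrict (Ioc a t)))) :
    ∫ s in Ioc a t, ∫ τ in a..s, F s τ = ∫ τ in Ioc a t, ∫ s in τ..t, F s τ := calc
  _ = ∫ s in Ioc a t, ∫ τ in Ioc a t,
        {p : ℝ × ℝ | p.2 ≤ p.1}.indicator (Function.uncurry F) (s, τ) :=
      setIntegral_congr_fun measurableSet_Ioc fun _ hs =>
        (setIntegral_indicator_le_left _ hs).symm
  _ = ∫ τ in Ioc a t, ∫ s in Ioc a t,
        {p : ℝ × ℝ | p.2 ≤ p.1}.indicator (Function.uncurry F) (s, τ) :=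
      integral_integral_swap hF
  _ = _ := setIntegral_congr_fun measurableSet_Ioc fun _ hτ =>
        setIntegral_indicator_le_right _ hτ

end Dirichlet

section RiemannLiouville

variable {α t : ℝ} {h : ℝ → ℝ}

lemma integrable_indicator_sub_rpow_mul (hα : 0 < α) (hh : IntegrableOn h (Icc 0 t)) :
    Integrable ({p : ℝ × ℝ | p.2 ≤ p.1}.indicator
        (Function.uncurry fun s τ => (s - τ) ^ (α - 1) * h τ))
      ((volume.restrict (Ioc 0 t)).prod (volume.restrict (Ioc 0 t))) := by
  have hmeas : AEStronglyMeasurable ({p : ℝ × ℝ | p.2 ≤ p.1}.indicator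
      (Function.uncurry fun s τ => (s - τ) ^ (α - 1) * h τ))
      ((volume.restrict (Ioc 0 t)).prod (volume.restrict (Ioc 0 t))) :=
    ((by fun_prop : Measurable fun p : ℝ × ℝ => (p.1 - p.2) ^ (α - 1)).aestronglyMeasurable.mul
        (hh.mono_set Ioc_subset_Icc_self).aestronglyMeasurable.comp_snd).indicator
      (measurableSet_le measurable_snd measurable_fst)
  refine (integrable_prod_iff' hmeas).2 ⟨?_, ?_⟩
  · filter_upwards [ae_restrict_mem measurableSet_Ioc] with τ hτ
    simp_rw [indicator_le_apply_eq_indicator_Ici]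
    rw [integrable_indicator_iff measurableSet_Ici, IntegrableOn,
      Measure.restrict_restrict measurableSet_Ici, inter_comm, Ioc_inter_Ici_eq_Icc hτ]
    exact (integrableOn_Icc_iff_integrableOn_Ioc).2
      ((intervalIntegrable_sub_rpow hα τ t).1.mul_const (h τ))
  · have hnorm : ∀ τ ∈ Ioc 0 t,
        ∫ s in Ioc 0 t, ‖{p : ℝ × ℝ | p.2 ≤ p.1}.indicator
          (Function.uncurry fun s τ => (s - τ) ^ (α - 1) * h τ) (s, τ)‖
          = (t - τ) ^ α / α * ‖h τ‖ := by
      intro τ hτ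
      simp_rw [norm_indicator_eq_indicator_norm]
      rw [setIntegral_indicator_le_right _ hτ, ← integral_sub_rpow hα,
        ← intervalIntegral.integral_mul_const]
      refine integral_congr fun s hs => ?_
      rw [uIcc_of_le hτ.2] at hs
      simp [norm_mul, Real.norm_of_nonneg (Real.rpow_nonneg (sub_nonneg.2 hs.1) _)]
    have hcont : ContinuousOn (fun τ => (t - τ) ^ α / α) (Icc 0 t) :=
      ((continuous_const.sub continuous_id).rpow_const fun _ => Or.inr hα.le).div_const α
        |>.continuousOn
    exact ((IntegrableOn.continuousOn_mul hcont hh.norm isCompact_Icc).mono_set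
      Ioc_subset_Icc_self).congr_fun (fun τ hτ => (hnorm τ hτ).symm) measurableSet_Ioc

lemma integrableOn_riemannLiouville (hα : 0 < α) (hh : IntegrableOn h (Icc 0 t)) :
    IntegrableOn (riemannLiouville α h) (Ioc 0 t) := by
  refine ((integrable_indicator_sub_rpow_mul hα hh).integral_prod_left.const_mul
    (1 / Real.Gamma α)).congr ?_
  filter_upwards [ae_restrict_mem measurableSet_Ioc] with s hs
  rw [setIntegral_indicator_le_left _ hs]
  rfl

lemma riemannLiouville_add_one (hα : 0 < α) :
    riemannLiouville (α + 1) h t = 1 / Real.Gamma α * ∫ τ in 0..t, (t - τ) ^ α / α * h τ := by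
  simp_rw [riemannLiouville, Real.Gamma_add_one hα.ne', add_sub_cancel_right,
    div_mul_eq_mul_div, intervalIntegral.integral_div]
  field_simp

lemma integral_riemannLiouville (hα : 0 < α) (ht : 0 ≤ t) (hh : IntegrableOn h (Icc 0 t)) :
    ∫ s in 0..t, riemannLiouville α h s = riemannLiouville (α + 1) h t := by
  have hswap := integral_integral_swap_triangle (integrable_indicator_sub_rpow_mul hα hh)
  simp only [intervalIntegral.integral_mul_const, integral_sub_rpow hα] at hswap
  rw [riemannLiouville_add_one hα, integral_of_le ht, integral_of_le ht, ← hswap,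
    ← MeasureTheory.integral_const_mul]
  rfl

lemma riemannLiouville_primitive (hα : 0 < α) (ht : 0 ≤ t) (hh : IntegrableOn h (Icc 0 t)) :
    riemannLiouville α (fun s => ∫ τ in 0..s, h τ) t = riemannLiouville (α + 1) h t := by
  have hswap := integral_integral_swap_triangle (F := fun s τ => (t - s) ^ (α - 1) * h τ)
    (((intervalIntegrable_rpow_sub hα 0 t).1.mul_prod (hh.mono_set Ioc_subset_Icc_self))
      |>.indicator (measurableSet_le measurable_snd measurable_fst))
  simp only [intervalIntegral.integral_const_mul, intervalIntegral.integral_mul_const,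
    integral_rpow_sub hα] at hswap
  rw [riemannLiouville_add_one hα, riemannLiouville, integral_of_le ht, integral_of_le ht, hswap]

lemma riemannLiouville_const (hα : 0 < α) (c : ℝ) :
    riemannLiouville α (fun _ => c) t = ∫ s in 0..t, s ^ (α - 1) / Real.Gamma α * c := by
  rw [riemannLiouville, intervalIntegral.integral_mul_const, integral_rpow_sub hα,
    intervalIntegral.integral_mul_const, intervalIntegral.integral_div,
    integral_rpow (by left; linarith), sub_add_cancel, Real.zero_rpow hα.ne', sub_zero,
    sub_zero]
  ring

lemma riemannLiouville_add (hα : 0 < α) {u v : ℝ → ℝ} (hu : ContinuousOn u (uIcc 0 t))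
    (hv : ContinuousOn v (uIcc 0 t)) :
    riemannLiouville α (u + v) t = riemannLiouville α u t + riemannLiouville α v t := by
  have hk := intervalIntegrable_rpow_sub hα 0 t
  simp only [riemannLiouville, Pi.add_apply, mul_add,
    integral_add (hk.mul_continuousOn hu) (hk.mul_continuousOn hv)]

end RiemannLiouville

lemma riemannLiouville_eq_integral {α t : ℝ} {f h : ℝ → ℝ} (hα : 0 < α) (ht : 0 ≤ t)
    (hh : IntegrableOn h (Icc 0 t)) (hf : ∀ s ∈ Icc 0 t, f s = f 0 + ∫ τ in 0..s, h τ) :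
    riemannLiouville α f t
      = ∫ s in 0..t, (riemannLiouville α h s + s ^ (α - 1) / Real.Gamma α * f 0) := by
  have hf_eq : riemannLiouville α f t
      = riemannLiouville α ((fun _ => f 0) + fun s => ∫ τ in 0..s, h τ) t := by
    unfold riemannLiouville
    congr 1
    exact integral_congr fun s hs => by simp only [Pi.add_apply, hf s (uIcc_of_le ht ▸ hs)]
  have hprimitive : ContinuousOn (fun s => ∫ τ in 0..s, h τ) (uIcc 0 t) :=
    continuousOn_primitive_interval (by rwa [uIcc_of_le ht])
  have hpow : IntervalIntegrable (fun s => s ^ (α - 1) / Real.Gamma α * f 0) volume 0 t :=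
    ((intervalIntegrable_rpow' (by linarith)).div_const _).mul_const _
  rw [hf_eq, riemannLiouville_add hα continuousOn_const hprimitive, riemannLiouville_const hα,
    riemannLiouville_primitive hα ht hh, ← integral_riemannLiouville hα ht hh,
    integral_add ((intervalIntegrable_iff_integrableOn_Ioc_of_le ht).2
      (integrableOn_riemannLiouville hα hh)) hpow, add_comm]

lemma ae_hasDerivAt_of_eqOn_integral {E : Type*} [NormedAddCommGroup E] [NormedSpace ℝ E]
    [CompleteSpace E] {F g : ℝ → E} {a b : ℝ} (hg : IntegrableOn g (Ioc a b))
    (hF : EqOn F (fun t => ∫ s in a..t, g s) (Ioo a b)) :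
    ∀ᵐ t ∂volume.restrict (Ioo a b), HasDerivAt F (g t) t := by
  have hG : Integrable ((Ioc a b).indicator g) :=
    (integrable_indicator_iff measurableSet_Ioc).2 hg
  have hFG : EqOn F (fun t => ∫ s in a..t, (Ioc a b).indicator g s) (Ioo a b) := by
    intro t ht
    rw [hF ht]
    dsimp only
    rw [integral_of_le ht.1.le, integral_of_le ht.1.le]
    exact setIntegral_congr_fun measurableSet_Ioc fun s hs =>
      (indicator_of_mem (Ioc_subset_Ioc_right ht.2.le hs) g).symm
  filter_upwards [ae_restrict_mem measurableSet_Ioo,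
    ae_restrict_of_ae (LocallyIntegrable.ae_hasDerivAt_integral hG.locallyIntegrable)]
    with t ht hderiv
  rw [← indicator_of_mem (Ioo_subset_Ioc_self ht) g]
  exact (hderiv a).congr_of_eventuallyEq (hFG.eventuallyEq_of_mem (isOpen_Ioo.mem_nhds ht))

theorem rl_of_ac_is_ac_general (T α : ℝ) (hα : α ∈ Ioo (0:ℝ) 1)
    (f f' : ℝ → ℝ) (hf' : IntegrableOn f' (Icc 0 T))
    (hf : ∀ t ∈ Icc (0:ℝ) T, f t = f 0 + ∫ s in (0:ℝ)..t, f' s) :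
    (∃ g : ℝ → ℝ, IntegrableOn g (Icc 0 T) ∧
        ∀ t ∈ Icc (0:ℝ) T,
          riemannLiouville α f t = riemannLiouville α f 0 + ∫ s in (0:ℝ)..t, g s) ∧
    (∀ᵐ t ∂(volume.restrict (Ioo (0:ℝ) T)),
      HasDerivAt (riemannLiouville α f)
        (riemannLiouville α f' t + t ^ (α - 1) / Real.Gamma α * f 0) t) := by
  set g : ℝ → ℝ := fun s => riemannLiouville α f' s + s ^ (α - 1) / Real.Gamma α * f 0
  have hg : IntegrableOn g (Ioc 0 T) := (integrableOn_riemannLiouville hα.1 hf').add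
    (((intervalIntegrable_rpow' (by linarith [hα.1])).1.div_const _).mul_const _)
  have hfg : ∀ t ∈ Icc (0:ℝ) T, riemannLiouville α f t = ∫ s in (0:ℝ)..t, g s :=
    fun t ht => riemannLiouville_eq_integral hα.1 ht.1 (hf'.mono_set (Icc_subset_Icc_right ht.2))
      fun s hs => hf s ⟨hs.1, hs.2.trans ht.2⟩
  refine ⟨⟨g, (integrableOn_Icc_iff_integrableOn_Ioc).2 hg, fun t ht => ?_⟩,
    ae_hasDerivAt_of_eqOn_integral hg fun t ht => hfg t (Ioo_subset_Icc_self ht)⟩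
  rw [hfg t ht]
  simp [riemannLiouville]

theorem rl_of_ac_is_ac (T α : ℝ) (hT : 0 < T) (hα : α ∈ Ioo (0:ℝ) 1)
    (f f' : ℝ → ℝ) (hf' : IntegrableOn f' (Icc 0 T))
    (hf : ∀ t ∈ Icc (0:ℝ) T, f t = f 0 + ∫ s in (0:ℝ)..t, f' s) :
    (∃ g : ℝ → ℝ, IntegrableOn g (Icc 0 T) ∧
        ∀ t ∈ Icc (0:ℝ) T,
          riemannLiouville α f t = riemannLiouville α f 0 + ∫ s in (0:ℝ)..t, g s) ∧
    (∀ᵐ t ∂(volume.restrict (Ioo (0:ℝ) T)),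
      HasDerivAt (riemannLiouville α f)
        (riemannLiouville α f' t + t ^ (α - 1) / Real.Gamma α * f 0) t) :=
  rl_of_ac_is_ac_general T α hα f f' hf' hf
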